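/- Let n ≥ 6 and 0 ≤ α ≤ 1. Then ρ_{D_α}(S_n^+) is the largest root of the cubic equation ρ³ − (3αn + 2n − α − 7)ρ² + (2α²n² + 6αn² − α²n − 17αn + 2α − 7n + 17)ρ − (4α²n³ − 10α²n² − 8αn² + 4α²n + 19αn − 7α + 3n − 5) = 0. -/

import Mathlib

open Matrix

/-- The distance matrix of a simple graph, with `(u,v)`-entry the graph distance. -/
noncomputable def distMatrix {n : ℕ} (G : SimpleGraph (Fin n)) : Matrix (Fin n) (Fin n) ℝ :=
  fun u v => (G.dist u v : ℝ)

/-- The transmission of a vertex: the sum of distances to all vertices. -/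
noncomputable def transmission {n : ℕ} (G : SimpleGraph (Fin n)) (u : Fin n) : ℝ :=
  ∑ v, (G.dist u v : ℝ)

/-- The generalized distance matrix `D_α(G) = α · Tr(G) + (1−α) · D(G)`. -/
noncomputable def Dalpha {n : ℕ} (α : ℝ) (G : SimpleGraph (Fin n)) : Matrix (Fin n) (Fin n) ℝ :=
  α • Matrix.diagonal (transmission G) + (1 - α) • distMatrix G

/-- The largest (real) eigenvalue of a matrix. -/
noncomputable def specRadius {n : ℕ} (M : Matrix (Fin n) (Fin n) ℝ) : ℝ :=
  sSup {μ : ℝ | Module.End.HasEigenvalue (Matrix.toLin' M) μ}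

/-- The Wiener index: sum of distances over unordered pairs. -/
noncomputable def wienerIndex {n : ℕ} (G : SimpleGraph (Fin n)) : ℝ :=
  (∑ u, ∑ v, (G.dist u v : ℝ)) / 2

/-- The star `S_n` with center the vertex `0`. -/
def starGraph (n : ℕ) : SimpleGraph (Fin n) where
  Adj u v := u ≠ v ∧ (u.val = 0 ∨ v.val = 0)
  symm := ⟨by rintro u v ⟨h1, h2⟩; exact ⟨h1.symm, h2.symm⟩⟩
  loopless := ⟨by rintro u ⟨h1, _⟩; exact h1 rfl⟩

/-- The unicyclic graph `S_n⁺`, obtained from the star `S_n` by adding one edge. -/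
def starPlus (n : ℕ) : SimpleGraph (Fin n) where
  Adj u v := u ≠ v ∧ (u.val = 0 ∨ v.val = 0 ∨ (u.val = 1 ∧ v.val = 2) ∨ (u.val = 2 ∧ v.val = 1))
  symm := ⟨by rintro u v ⟨h1, h2⟩; exact ⟨h1.symm, by tauto⟩⟩
  loopless := ⟨by rintro u ⟨h1, _⟩; exact h1 rfl⟩

/-!
Every vertex of `S_n⁺` is adjacent to the centre `0`, so all distances are `0`, `1` or `2` and
`D_α` is explicit. The partition `{0}`, `{1, 2}`, `{3, …, n-1}` is equitable: `D_α` maps vectors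
constant on its cells to such vectors, acting there by a `3 × 3` quotient matrix whose
characteristic polynomial is the cubic. Hence every root of the cubic is an eigenvalue of `D_α`.
Conversely, an eigenvector whose eigenvalue differs from `α(2n-3) - 1` and `α(2n-1) - 2` is
constant on the cells, so its eigenvalue is a root of the cubic. Finally the cubic is `≤ 0` at
`2n - 8 + 5α`, which exceeds both exceptional eigenvalues, so it has a root beyond them, and the
largest eigenvalue is the largest root.
-/

open Module.End Filter

namespace SimpleGraph

variable {V : Type*} [DecidableEq V] {G : SimpleGraph V} [DecidableRel G.Adj]

theorem dist_eq_of_forall_adj {c : V} (hc : ∀ v, v ≠ c → G.Adj c v) (u v : V) :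
    G.dist u v = if u = v then 0 else if G.Adj u v then 1 else 2 := by
  split_ifs with huv hadj
  · simp [huv]
  · exact dist_eq_one_iff_adj.2 hadj
  · have huc : u ≠ c := fun h => hadj (h ▸ hc v (h ▸ Ne.symm huv))
    have hvc : v ≠ c := fun h => hadj (h ▸ (hc u huc).symm)
    let w : G.Walk u v := ((hc u huc).symm.toWalk).append (hc v hvc).toWalk
    have hle : G.dist u v ≤ 2 := by simpa [w] using dist_le w
    have hne0 : G.dist u v ≠ 0 := Reachable.dist_eq_zero_iff ⟨w⟩ |>.not.2 huv
    have hne1 : G.dist u v ≠ 1 := fun h => hadj (dist_eq_one_iff_adj.1 h)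
    omega

variable [Fintype V]

theorem sum_dist_mul_of_forall_adj {c : V} (hc : ∀ v, v ≠ c → G.Adj c v) (x : V → ℝ) (u : V) :
    ∑ v, (G.dist u v : ℝ) * x v = 2 * ∑ v, x v - 2 * x u - ∑ v ∈ G.neighborFinset u, x v := by
  have hdist : ∀ v, (G.dist u v : ℝ) * x v =
      2 * x v - 2 * (if u = v then x v else 0) - (if G.Adj u v then x v else 0) := by
    intro v
    rw [dist_eq_of_forall_adj hc]
    by_cases huv : u = v
    · simp [huv]
    by_cases hadj : G.Adj u v
    · simp only [huv, hadj, if_true, if_false, Nat.cast_one]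
      ring
    · simp [huv, hadj]
  simp only [hdist, Finset.sum_sub_distrib, ← Finset.mul_sum, Finset.sum_ite_eq, Finset.mem_univ,
    if_true, neighborFinset_eq_filter, Finset.sum_filter]

end SimpleGraph

section Dalpha

variable {n : ℕ} (α : ℝ) (G : SimpleGraph (Fin n))

theorem Dalpha_mulVec_apply (x : Fin n → ℝ) (u : Fin n) :
    (Dalpha α G *ᵥ x) u = α * transmission G u * x u + (1 - α) * ∑ v, (G.dist u v : ℝ) * x v := by
  simp only [Dalpha, add_mulVec, smul_mulVec, Pi.add_apply, Pi.smul_apply, mulVec_diagonal,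
    smul_eq_mul, mul_assoc]
  rfl

variable [DecidableRel G.Adj] {c : Fin n} (hc : ∀ v, v ≠ c → G.Adj c v)
include hc

theorem transmission_eq_of_forall_adj (u : Fin n) :
    transmission G u = 2 * n - 2 - G.degree u := by
  simpa [transmission, SimpleGraph.card_neighborFinset_eq_degree] using
    SimpleGraph.sum_dist_mul_of_forall_adj hc 1 u

theorem Dalpha_mulVec_apply_of_forall_adj (x : Fin n → ℝ) (u : Fin n) :
    (Dalpha α G *ᵥ x) u = α * (2 * n - 2 - G.degree u) * x u +
      (1 - α) * (2 * ∑ v, x v - 2 * x u - ∑ v ∈ G.neighborFinset u, x v) := by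
  rw [Dalpha_mulVec_apply, transmission_eq_of_forall_adj G hc,
    SimpleGraph.sum_dist_mul_of_forall_adj hc]

end Dalpha

namespace Matrix

variable {ι κ K : Type*} [Fintype ι] [Fintype κ] [DecidableEq κ] [CommRing K]
  {M : Matrix ι ι K} {B : Matrix κ κ K} {π : ι → κ}

theorem hasEigenvalue_toLin'_of_mulVec_comp [DecidableEq ι] (hπ : Function.Surjective π)
    (hMB : ∀ w, M *ᵥ (w ∘ π) = (B *ᵥ w) ∘ π) {ρ : K} (h : HasEigenvalue (toLin' B) ρ) :
    HasEigenvalue (toLin' M) ρ := by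
  obtain ⟨w, hw, hw0⟩ := h.exists_hasEigenvector
  rw [mem_eigenspace_iff, toLin'_apply] at hw
  refine hasEigenvalue_of_hasEigenvector (x := w ∘ π) ⟨?_, ?_⟩
  · rw [mem_eigenspace_iff, toLin'_apply, hMB, hw]
    rfl
  · exact fun h => hw0 (hπ.injective_comp_right h)

theorem hasEigenvalue_toLin'_of_mulVec_comp_eq_smul (hπ : Function.Surjective π)
    (hMB : ∀ w, M *ᵥ (w ∘ π) = (B *ᵥ w) ∘ π) {ρ : K} {w : κ → K} (hw : w ≠ 0)
    (hx : M *ᵥ (w ∘ π) = ρ • (w ∘ π)) : HasEigenvalue (toLin' B) ρ := by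
  refine hasEigenvalue_of_hasEigenvector (x := w) ⟨?_, hw⟩
  rw [mem_eigenspace_iff, toLin'_apply]
  exact hπ.injective_comp_right ((hMB w).symm.trans hx)

end Matrix

theorem Matrix.tendsto_eval_charpoly_atTop {ι : Type*} [Fintype ι] [DecidableEq ι] [Nonempty ι]
    (A : Matrix ι ι ℝ) : Tendsto (fun x => A.charpoly.eval x) atTop atTop :=
  Polynomial.tendsto_atTop_of_leadingCoeff_nonneg _
    (by simp [Matrix.charpoly_degree_eq_dim, Fintype.card_pos])
    (by simp [A.charpoly_monic.leadingCoeff])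

theorem Set.Finite.isGreatest_csSup_of_forall_exists_le {α : Type*}
    [ConditionallyCompleteLinearOrder α] {S R : Set α} (hS : S.Finite) (hRS : R ⊆ S)
    (hR : R.Nonempty) (h : ∀ μ ∈ S, ∃ r ∈ R, μ ≤ r) : IsGreatest R (sSup S) := by
  obtain ⟨r, hr, hle⟩ := h _ ((hR.mono hRS).csSup_mem hS)
  obtain rfl : r = sSup S := le_antisymm (le_csSup hS.bddAbove (hRS hr)) hle
  exact ⟨hr, fun ρ hρ => le_csSup hS.bddAbove (hRS hρ)⟩

namespace starPlus

variable {n : ℕ}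

instance : DecidableRel (starPlus n).Adj := fun u v =>
  inferInstanceAs (Decidable (u ≠ v ∧ (u.val = 0 ∨ v.val = 0 ∨ (u.val = 1 ∧ v.val = 2) ∨
    (u.val = 2 ∧ v.val = 1))))

theorem adj_iff {u v : Fin n} : (starPlus n).Adj u v ↔ u ≠ v ∧
    (u.val = 0 ∨ v.val = 0 ∨ (u.val = 1 ∧ v.val = 2) ∨ (u.val = 2 ∧ v.val = 1)) :=
  Iff.rfl

theorem adj_zero (h : 0 < n) (v : Fin n) (hv : v ≠ ⟨0, h⟩) : (starPlus n).Adj ⟨0, h⟩ v :=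
  ⟨hv.symm, Or.inl rfl⟩

theorem neighborFinset_zero (h : 0 < n) :
    (starPlus n).neighborFinset ⟨0, h⟩ = Finset.univ.erase ⟨0, h⟩ := by
  ext v
  simp [adj_iff, Fin.ext_iff, eq_comm]

theorem neighborFinset_one (h : 2 < n) :
    (starPlus n).neighborFinset ⟨1, by omega⟩ = {⟨0, by omega⟩, ⟨2, h⟩} := by
  ext v
  simp only [SimpleGraph.mem_neighborFinset, adj_iff, Finset.mem_insert, Finset.mem_singleton,
    ne_eq, Fin.ext_iff, true_and]
  omega

theorem neighborFinset_two (h : 2 < n) :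
    (starPlus n).neighborFinset ⟨2, h⟩ = {⟨0, by omega⟩, ⟨1, by omega⟩} := by
  ext v
  simp only [SimpleGraph.mem_neighborFinset, adj_iff, Finset.mem_insert, Finset.mem_singleton,
    ne_eq, Fin.ext_iff, true_and]
  omega

theorem neighborFinset_of_three_le {u : Fin n} (hu : 3 ≤ u.val) :
    (starPlus n).neighborFinset u = {⟨0, by omega⟩} := by
  ext v
  simp only [SimpleGraph.mem_neighborFinset, adj_iff, Finset.mem_singleton, ne_eq, Fin.ext_iff]
  omega

section Dalpha

variable (α : ℝ) (x : Fin n → ℝ)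

theorem Dalpha_mulVec_apply_zero (h : 0 < n) :
    (Dalpha α (starPlus n) *ᵥ x) ⟨0, h⟩ =
      α * (n - 1) * x ⟨0, h⟩ + (1 - α) * (∑ v, x v - x ⟨0, h⟩) := by
  rw [Dalpha_mulVec_apply_of_forall_adj α _ (adj_zero h),
    ← SimpleGraph.card_neighborFinset_eq_degree, neighborFinset_zero,
    Finset.sum_erase_eq_sub (Finset.mem_univ _), Finset.card_erase_of_mem (Finset.mem_univ _),
    Finset.card_univ, Fintype.card_fin, Nat.cast_sub (Nat.one_le_of_lt h)]
  push_cast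
  ring

theorem Dalpha_mulVec_apply_one (h : 2 < n) :
    (Dalpha α (starPlus n) *ᵥ x) ⟨1, by omega⟩ = α * (2 * n - 4) * x ⟨1, by omega⟩ +
      (1 - α) * (2 * ∑ v, x v - x ⟨0, by omega⟩ - 2 * x ⟨1, by omega⟩ - x ⟨2, h⟩) := by
  have h02 : (⟨0, by omega⟩ : Fin n) ≠ ⟨2, h⟩ := Fin.ne_of_val_ne (by simp)
  rw [Dalpha_mulVec_apply_of_forall_adj α _ (adj_zero (by omega)),
    ← SimpleGraph.card_neighborFinset_eq_degree, neighborFinset_one h, Finset.card_pair h02,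
    Finset.sum_pair h02]
  push_cast
  ring

theorem Dalpha_mulVec_apply_two (h : 2 < n) :
    (Dalpha α (starPlus n) *ᵥ x) ⟨2, h⟩ = α * (2 * n - 4) * x ⟨2, h⟩ +
      (1 - α) * (2 * ∑ v, x v - x ⟨0, by omega⟩ - x ⟨1, by omega⟩ - 2 * x ⟨2, h⟩) := by
  have h01 : (⟨0, by omega⟩ : Fin n) ≠ ⟨1, by omega⟩ := Fin.ne_of_val_ne (by simp)
  rw [Dalpha_mulVec_apply_of_forall_adj α _ (adj_zero (by omega)),
    ← SimpleGraph.card_neighborFinset_eq_degree, neighborFinset_two h, Finset.card_pair h01,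
    Finset.sum_pair h01]
  push_cast
  ring

theorem Dalpha_mulVec_apply_of_three_le {u : Fin n} (hu : 3 ≤ u.val) :
    (Dalpha α (starPlus n) *ᵥ x) u =
      α * (2 * n - 3) * x u + (1 - α) * (2 * ∑ v, x v - x ⟨0, by omega⟩ - 2 * x u) := by
  rw [Dalpha_mulVec_apply_of_forall_adj α _ (adj_zero (by omega)),
    ← SimpleGraph.card_neighborFinset_eq_degree, neighborFinset_of_three_le hu,
    Finset.card_singleton, Finset.sum_singleton]
  push_cast
  ring

end Dalpha

def cell : Fin n → Fin 3
  | ⟨0, _⟩ => 0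
  | ⟨1, _⟩ => 1
  | ⟨2, _⟩ => 1
  | ⟨_ + 3, _⟩ => 2

theorem cell_surjective (hn : 4 ≤ n) : Function.Surjective (cell : Fin n → Fin 3) := by
  intro k
  fin_cases k
  · exact ⟨⟨0, by omega⟩, rfl⟩
  · exact ⟨⟨1, by omega⟩, rfl⟩
  · exact ⟨⟨3, by omega⟩, rfl⟩

theorem sum_comp_cell (hn : 3 ≤ n) (w : Fin 3 → ℝ) :
    ∑ u : Fin n, w (cell u) = w 0 + 2 * w 1 + (n - 3) * w 2 := by
  obtain ⟨m, rfl⟩ : ∃ m, n = m + 3 := ⟨n - 3, by omega⟩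
  rw [Fin.sum_univ_succ, Fin.sum_univ_succ, Fin.sum_univ_succ]
  change w 0 + (w 1 + (w 1 + ∑ _i : Fin m, w 2)) = _
  rw [Fin.sum_const, nsmul_eq_mul]
  push_cast
  ring

/-- Entry `(i, j)` is `1 - α` times the total distance from a vertex of cell `i` to cell `j`,
plus `α` times the transmission of that vertex on the diagonal. -/
def quotientMatrix (n : ℕ) (α : ℝ) : Matrix (Fin 3) (Fin 3) ℝ :=
  !![α * (n - 1), 2 * (1 - α), (n - 3) * (1 - α);
     1 - α, α * (2 * n - 4) + (1 - α), 2 * (n - 3) * (1 - α);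
     1 - α, 4 * (1 - α), α * (2 * n - 3) + 2 * (n - 4) * (1 - α)]

theorem Dalpha_mulVec_comp_cell (hn : 3 ≤ n) (α : ℝ) (w : Fin 3 → ℝ) :
    Dalpha α (starPlus n) *ᵥ (w ∘ cell) = (quotientMatrix n α *ᵥ w) ∘ cell := by
  have hsum : ∑ v, (w ∘ cell) v = w 0 + 2 * w 1 + (n - 3) * w 2 := sum_comp_cell hn w
  funext u
  obtain ⟨_ | _ | _ | k, hk⟩ := u
  on_goal 1 => rw [Dalpha_mulVec_apply_zero, hsum]
  on_goal 2 => rw [Dalpha_mulVec_apply_one α _ hn, hsum]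
  on_goal 3 => rw [Dalpha_mulVec_apply_two, hsum]
  on_goal 4 => rw [Dalpha_mulVec_apply_of_three_le α _ (Nat.le_add_left 3 k), hsum]
  all_goals
    simp only [Function.comp_apply, cell, quotientMatrix, cons_mulVec, empty_mulVec, dotProduct,
      Fin.sum_univ_three, cons_val_zero, cons_val_one, cons_val, zero_add, Nat.reduceAdd]
    ring

theorem eq_comp_cell_of_mulVec_eq_smul (hn : 4 ≤ n) {α μ : ℝ} {x : Fin n → ℝ}
    (hx : Dalpha α (starPlus n) *ᵥ x = μ • x)
    (h₁ : μ ≠ α * (2 * n - 3) - 1) (h₂ : μ ≠ α * (2 * n - 1) - 2) :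
    x = ![x ⟨0, by omega⟩, x ⟨1, by omega⟩, x ⟨3, hn⟩] ∘ cell := by
  have hrow (u : Fin n) : (Dalpha α (starPlus n) *ᵥ x) u = μ * x u := congrFun hx u
  have h12 : x ⟨1, by omega⟩ = x ⟨2, by omega⟩ := by
    have e₁ := hrow ⟨1, by omega⟩
    have e₂ := hrow ⟨2, by omega⟩
    rw [Dalpha_mulVec_apply_one α x (by omega)] at e₁
    rw [Dalpha_mulVec_apply_two] at e₂
    have : (μ - (α * (2 * n - 3) - 1)) * (x ⟨1, by omega⟩ - x ⟨2, by omega⟩) = 0 := by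
      linear_combination e₂ - e₁
    exact sub_eq_zero.1 ((mul_eq_zero.1 this).resolve_left (sub_ne_zero.2 h₁))
  have h3 (u : Fin n) (hu : 3 ≤ u.val) : x u = x ⟨3, hn⟩ := by
    have e := hrow u
    have e₃ := hrow ⟨3, hn⟩
    rw [Dalpha_mulVec_apply_of_three_le α x hu] at e
    rw [Dalpha_mulVec_apply_of_three_le α x le_rfl] at e₃
    have : (μ - (α * (2 * n - 1) - 2)) * (x u - x ⟨3, hn⟩) = 0 := by
      linear_combination e₃ - e
    exact sub_eq_zero.1 ((mul_eq_zero.1 this).resolve_left (sub_ne_zero.2 h₂))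
  funext u
  obtain ⟨_ | _ | _ | k, hk⟩ := u
  · rfl
  · rfl
  · exact h12.symm
  · exact h3 _ (Nat.le_add_left 3 k)

variable {α : ℝ}

/-- Spelled exactly as in `stmt_15`, whose root set is then `{ρ | cubic n α ρ = 0}` by definition. -/
def cubic (n : ℕ) (α ρ : ℝ) : ℝ :=
  ρ ^ 3 - (3 * α * n + 2 * n - α - 7) * ρ ^ 2 +
    (2 * α ^ 2 * n ^ 2 + 6 * α * n ^ 2 - α ^ 2 * n - 17 * α * n + 2 * α - 7 * n + 17) * ρ -
    (4 * α ^ 2 * n ^ 3 - 10 * α ^ 2 * n ^ 2 - 8 * α * n ^ 2 + 4 * α ^ 2 * n +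
      19 * α * n - 7 * α + 3 * n - 5)

theorem eval_charpoly_quotientMatrix (ρ : ℝ) :
    (quotientMatrix n α).charpoly.eval ρ = cubic n α ρ := by
  rw [eval_charpoly, det_fin_three]
  simp only [quotientMatrix, cubic, Matrix.sub_apply, scalar_apply, diagonal_apply, of_apply, cons_val',
    cons_val_zero, cons_val_one, cons_val, cons_val_fin_one, Fin.reduceEq, if_true, if_false]
  ring

theorem hasEigenvalue_quotientMatrix_iff {ρ : ℝ} :
    HasEigenvalue (toLin' (quotientMatrix n α)) ρ ↔ cubic n α ρ = 0 := by
  rw [hasEigenvalue_iff_isRoot_charpoly, charpoly_toLin', Polynomial.IsRoot.def,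
    eval_charpoly_quotientMatrix]

theorem hasEigenvalue_Dalpha_of_cubic_eq_zero (hn : 4 ≤ n) {ρ : ℝ} (h : cubic n α ρ = 0) :
    HasEigenvalue (toLin' (Dalpha α (starPlus n))) ρ :=
  hasEigenvalue_toLin'_of_mulVec_comp (cell_surjective hn)
    (Dalpha_mulVec_comp_cell (by omega) α) (hasEigenvalue_quotientMatrix_iff.2 h)

theorem cubic_eq_zero_of_hasEigenvalue_Dalpha (hn : 4 ≤ n) {μ : ℝ}
    (h : HasEigenvalue (toLin' (Dalpha α (starPlus n))) μ)
    (h₁ : μ ≠ α * (2 * n - 3) - 1) (h₂ : μ ≠ α * (2 * n - 1) - 2) : cubic n α μ = 0 := by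
  obtain ⟨x, hx, hx0⟩ := h.exists_hasEigenvector
  rw [mem_eigenspace_iff, toLin'_apply] at hx
  have hxw := eq_comp_cell_of_mulVec_eq_smul hn hx h₁ h₂
  refine hasEigenvalue_quotientMatrix_iff.1 <|
    hasEigenvalue_toLin'_of_mulVec_comp_eq_smul (cell_surjective hn)
      (Dalpha_mulVec_comp_cell (by omega) α) (w := ![_, _, _]) ?_ (hxw ▸ hx)
  rintro hw
  exact hx0 (hxw.trans (by rw [hw]; rfl))

theorem tendsto_cubic : Tendsto (cubic n α) atTop atTop := by
  simpa [eval_charpoly_quotientMatrix] using (quotientMatrix n α).tendsto_eval_charpoly_atTop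

theorem exists_cubic_eq_zero_ge (hn : 5 ≤ n) (hα : α ≤ 1) :
    ∃ r, cubic n α r = 0 ∧ α * (2 * n - 3) - 1 ≤ r ∧ α * (2 * n - 1) - 2 ≤ r := by
  have hn' : (5 : ℝ) ≤ n := by exact_mod_cast hn
  set t : ℝ := 2 * n - 8 + 5 * α
  have ht : cubic n α t ≤ 0 := by
    have hfac : cubic n α t = (1 - α) ^ 2 * (n - 3) * (10 * α * (n - 5) - (18 * n - 65)) := by
      simp only [cubic, t]
      ring
    rw [hfac]
    exact mul_nonpos_of_nonneg_of_nonpos (mul_nonneg (sq_nonneg _) (by linarith)) (by nlinarith)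
  have hcont : Continuous (cubic n α) := by
    unfold cubic
    fun_prop
  obtain ⟨r, hrt, hr⟩ := intermediate_value_Ici hcont.continuousOn tendsto_cubic ht
  exact ⟨r, hr, by nlinarith [Set.mem_Ici.1 hrt], by nlinarith [Set.mem_Ici.1 hrt]⟩

end starPlus

theorem stmt_15_general {n : ℕ} (hn : 6 ≤ n) (α : ℝ) (hα1 : α ≤ 1) :
    IsGreatest {ρ : ℝ |
        ρ ^ 3 - (3 * α * n + 2 * n - α - 7) * ρ ^ 2 +
          (2 * α ^ 2 * n ^ 2 + 6 * α * n ^ 2 - α ^ 2 * n - 17 * α * n + 2 * α -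
            7 * n + 17) * ρ -
          (4 * α ^ 2 * n ^ 3 - 10 * α ^ 2 * n ^ 2 - 8 * α * n ^ 2 + 4 * α ^ 2 * n +
            19 * α * n - 7 * α + 3 * n - 5) = 0}
      (specRadius (Dalpha α (starPlus n))) := by
  have hn₄ : 4 ≤ n := by omega
  obtain ⟨r, hr, hr₁, hr₂⟩ := starPlus.exists_cubic_eq_zero_ge (by omega : 5 ≤ n) hα1
  refine (finite_hasEigenvalue _).isGreatest_csSup_of_forall_exists_le
    (fun ρ hρ => starPlus.hasEigenvalue_Dalpha_of_cubic_eq_zero hn₄ hρ) ⟨r, hr⟩ ?_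
  intro μ hμ
  by_cases h₁ : μ = α * (2 * n - 3) - 1
  · exact ⟨r, hr, h₁ ▸ hr₁⟩
  by_cases h₂ : μ = α * (2 * n - 1) - 2
  · exact ⟨r, hr, h₂ ▸ hr₂⟩
  exact ⟨μ, starPlus.cubic_eq_zero_of_hasEigenvalue_Dalpha hn₄ hμ h₁ h₂, le_rfl⟩

/-- `ρ_{D_α}(S_n⁺)` is the largest root of the cubic
`ρ³ − (3αn + 2n − α − 7)ρ² + (2α²n² + 6αn² − α²n − 17αn + 2α − 7n + 17)ρ
 − (4α²n³ − 10α²n² − 8αn² + 4α²n + 19αn − 7α + 3n − 5) = 0`. -/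
theorem stmt_15 {n : ℕ} (hn : 6 ≤ n) (α : ℝ) (hα0 : 0 ≤ α) (hα1 : α ≤ 1) :
    IsGreatest {ρ : ℝ |
        ρ ^ 3 - (3 * α * n + 2 * n - α - 7) * ρ ^ 2 +
          (2 * α ^ 2 * n ^ 2 + 6 * α * n ^ 2 - α ^ 2 * n - 17 * α * n + 2 * α -
            7 * n + 17) * ρ -
          (4 * α ^ 2 * n ^ 3 - 10 * α ^ 2 * n ^ 2 - 8 * α * n ^ 2 + 4 * α ^ 2 * n +
            19 * α * n - 7 * α + 3 * n - 5) = 0}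
      (specRadius (Dalpha α (starPlus n))) :=
  stmt_15_general hn α hα1
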